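/- arXiv:1108.3425 — 4 statements merged into one kernel-verified Lean document; each statement's English description precedes it below -/
import Mathlib

section
/- Let U = [[1,1],[0,1]] and L = [[1,0],[1,1]]. Let (n_1, …, n_k) be a list of integers with k ≥ 2, n_1 ≥ 0, and n_i ≥ 1 for 2 ≤ i ≤ k. Form the matrix M = X^{n_k−1} ⋯ U^{n_2} L^{n_1} · [[1,0],[0,−1]], where the word alternates between powers of L (odd-indexed blocks) and powers of U (even-indexed blocks) and X = U if k is even, X = L if k is odd. Write M = [[p,q],[r,s]]. Then ps − qr = −1, the first-column entries p, r are nonnegative with p + r ≥ 1, the second-column entries q, s are nonpositive with q + s ≤ −1, gcd(p+r, −(q+s)) = 1, and (p+r)/(q+s) = −[n_1,…,n_k], where [n_1,…,n_k] = n_1 + 1/(n_2 + 1/(⋯ + 1/n_k)). -/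
/-! Every factor `L^n`, `U^n` has determinant `1` and nonnegative entries, so the word
`W = wordAux true ns` does too, and then neither column of `W` vanishes: both column sums are
positive, and they are coprime since `det W = 1`. Multiplying on the right by `L^n` (resp. `U^n`)
adds `n` times the second (first) column sum to the first (second) one, which is the recursion
`[n, …] = n + 1 / […]`; hence the column sums of `W` have ratio `[n_1, …, n_k]`.
Finally `M = W · diag(1, -1)` only negates the second column. -/

/-- The base matrices: `B true = L = [[1,0],[1,1]]`, `B false = U = [[1,1],[0,1]]`. -/
def B (b : Bool) : Matrix (Fin 2) (Fin 2) ℤ :=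
  if b then !![1, 0; 1, 1] else !![1, 1; 0, 1]

/-- The alternating word matrix `X^{n_k - 1} ⋯ U^{n_2} L^{n_1}`, where block `i` uses `L`
if `i` is odd and `U` if `i` is even, and the final block's exponent is `n_k - 1`.
Start with `b = true` (so the first block uses `L`). -/
def wordAux : Bool → List ℕ → Matrix (Fin 2) (Fin 2) ℤ
  | _, [] => 1
  | b, [n] => B b ^ (n - 1)
  | b, n :: rest => wordAux (!b) rest * B b ^ n

/-- The continued fraction `[n_1, …, n_k] = n_1 + 1/(n_2 + 1/(⋯ + 1/n_k))`. -/
def cf : List ℕ → ℚ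
  | [] => 0
  | [n] => (n : ℚ)
  | n :: rest => (n : ℚ) + (cf rest)⁻¹

theorem Matrix.mul_apply_nonneg {m n o R : Type*} [Fintype n] [Semiring R] [PartialOrder R]
    [IsOrderedRing R] {A : Matrix m n R} {C : Matrix n o R} (hA : ∀ i j, 0 ≤ A i j)
    (hC : ∀ i j, 0 ≤ C i j) : ∀ i j, 0 ≤ (A * C) i j :=
  fun i j => Finset.sum_nonneg fun k _ => mul_nonneg (hA i k) (hC k j)

theorem B_true_pow (n : ℕ) : B true ^ n = !![1, 0; (n : ℤ), 1] := by
  induction n with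
  | zero => exact Matrix.one_fin_two
  | succ n ih =>
    rw [pow_succ, ih, B, if_pos rfl, Matrix.mul_fin_two]
    simp [add_comm]

theorem B_false_pow (n : ℕ) : B false ^ n = !![1, (n : ℤ); 0, 1] := by
  induction n with
  | zero => exact Matrix.one_fin_two
  | succ n ih =>
    rw [pow_succ, ih, B, if_neg Bool.false_ne_true, Matrix.mul_fin_two]
    simp [add_comm]

theorem det_B (b : Bool) : (B b).det = 1 := by
  cases b <;> simp [B, Matrix.det_fin_two_of]

theorem B_nonneg (b : Bool) : ∀ i j, 0 ≤ B b i j := by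
  cases b <;> simp [B, Fin.forall_fin_two]

theorem det_wordAux (b : Bool) (l : List ℕ) : (wordAux b l).det = 1 := by
  induction b, l using wordAux.induct with
  | case1 => simp [wordAux]
  | case2 b n => simp [wordAux, Matrix.det_pow, det_B]
  | case3 b n rest hrest ih => simp [wordAux.eq_3 b n rest hrest, Matrix.det_pow, det_B, ih]

theorem wordAux_nonneg (b : Bool) (l : List ℕ) : ∀ i j, 0 ≤ wordAux b l i j := by
  induction b, l using wordAux.induct with
  | case1 => simp [wordAux, Matrix.one_apply, Fin.forall_fin_two]
  | case2 b n => exact Matrix.pow_apply_nonneg (B_nonneg b) _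
  | case3 b n rest hrest ih =>
    rw [wordAux.eq_3 b n rest hrest]
    exact Matrix.mul_apply_nonneg ih (Matrix.pow_apply_nonneg (B_nonneg b) n)

def colSum (M : Matrix (Fin 2) (Fin 2) ℤ) (j : Fin 2) : ℤ := M 0 j + M 1 j

theorem one_le_colSum {M : Matrix (Fin 2) (Fin 2) ℤ} (hM : ∀ i j, 0 ≤ M i j) (hdet : M.det ≠ 0)
    (j : Fin 2) : 1 ≤ colSum M j := by
  by_contra! hlt
  have hcol : M 0 j = 0 ∧ M 1 j = 0 := by
    have := hM 0 j; have := hM 1 j; unfold colSum at hlt; omega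
  obtain ⟨h0, h1⟩ := hcol
  apply hdet
  fin_cases j <;> simp_all [Matrix.det_fin_two]

theorem isCoprime_colSum {M : Matrix (Fin 2) (Fin 2) ℤ} (hdet : M.det = 1) :
    IsCoprime (colSum M 0) (colSum M 1) :=
  ⟨M 1 1, -M 1 0, by rw [Matrix.det_fin_two] at hdet; simp only [colSum]; linear_combination hdet⟩

theorem colSum_mul_B_true_pow (M : Matrix (Fin 2) (Fin 2) ℤ) (n : ℕ) :
    colSum (M * B true ^ n) 0 = colSum M 0 + n * colSum M 1 ∧
      colSum (M * B true ^ n) 1 = colSum M 1 := by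
  simp [colSum, B_true_pow, Matrix.mul_apply, Fin.sum_univ_two]; ring

theorem colSum_mul_B_false_pow (M : Matrix (Fin 2) (Fin 2) ℤ) (n : ℕ) :
    colSum (M * B false ^ n) 0 = colSum M 0 ∧
      colSum (M * B false ^ n) 1 = colSum M 1 + n * colSum M 0 := by
  simp [colSum, B_false_pow, Matrix.mul_apply, Fin.sum_univ_two]; ring

theorem cf_eq_colSum_div (b : Bool) (l : List ℕ) (hl : l ≠ []) (hlast : 1 ≤ l.getLast hl) :
    cf l = if b then (colSum (wordAux b l) 0 : ℚ) / colSum (wordAux b l) 1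
      else (colSum (wordAux b l) 1 : ℚ) / colSum (wordAux b l) 0 := by
  induction b, l using wordAux.induct with
  | case1 => exact absurd rfl hl
  | case2 b n =>
    have hn : n - 1 + 1 = n := Nat.sub_add_cancel (by simpa using hlast)
    cases b <;> simp [cf, wordAux, colSum, B_true_pow, B_false_pow, add_comm] <;>
      exact_mod_cast hn.symm
  | case3 b n rest hrest ih =>
    have hV := ih hrest (by rwa [List.getLast_cons hrest] at hlast)
    have hpos (j : Fin 2) : (colSum (wordAux (!b) rest) j : ℚ) ≠ 0 := by
      have := one_le_colSum (wordAux_nonneg (!b) rest) (by simp [det_wordAux]) j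
      positivity
    rw [wordAux.eq_3 b n rest hrest, cf.eq_3 n rest hrest, hV]
    cases b
    · obtain ⟨h0, h1⟩ := colSum_mul_B_false_pow (wordAux true rest) n
      simp only [Bool.not_false, if_true, Bool.false_eq_true, if_false] at hpos ⊢
      rw [h0, h1]
      field_simp [hpos 0, hpos 1]
      push_cast; ring
    · obtain ⟨h0, h1⟩ := colSum_mul_B_true_pow (wordAux false rest) n
      simp only [Bool.not_true, if_true, Bool.false_eq_true, if_false] at hpos ⊢
      rw [h0, h1]
      field_simp [hpos 0, hpos 1]
      push_cast; ring

theorem stmt_5 (ns : List ℕ) (hlen : 2 ≤ ns.length)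
    (htail : ∀ n ∈ ns.tail, 1 ≤ n) :
    let M := wordAux true ns * !![(1 : ℤ), 0; 0, -1]
    let p := M 0 0; let q := M 0 1; let r := M 1 0; let s := M 1 1
    p * s - q * r = -1 ∧
    0 ≤ p ∧ 0 ≤ r ∧ 1 ≤ p + r ∧
    q ≤ 0 ∧ s ≤ 0 ∧ q + s ≤ -1 ∧
    Int.gcd (p + r) (-(q + s)) = 1 ∧
    ((p + r : ℤ) : ℚ) / ((q + s : ℤ) : ℚ) = -cf ns := by
  intro M p q r s
  set W := wordAux true ns
  have hne : ns ≠ [] := List.ne_nil_of_length_pos (by omega)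
  have htail_ne : ns.tail ≠ [] := List.ne_nil_of_length_pos (by simp; omega)
  have hlast : 1 ≤ ns.getLast hne :=
    htail _ (List.getLast_tail htail_ne ▸ List.getLast_mem htail_ne)
  have hM : M = !![W 0 0, -W 0 1; W 1 0, -W 1 1] := by
    ext i j; fin_cases i <;> fin_cases j <;> simp [M, W, Matrix.mul_apply, Fin.sum_univ_two]
  have hdet : W.det = 1 := det_wordAux true ns
  have hnn : ∀ i j, 0 ≤ W i j := wordAux_nonneg true ns
  have hsum (j : Fin 2) : 1 ≤ colSum W j := one_le_colSum hnn (by simp [hdet]) j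
  have hcf : cf ns = (colSum W 0 : ℚ) / colSum W 1 := cf_eq_colSum_div true ns hne hlast
  have hcop : IsCoprime (colSum W 0) (colSum W 1) := isCoprime_colSum hdet
  simp only [p, q, r, s, hM, Matrix.of_apply, Matrix.cons_val', Matrix.cons_val_zero,
    Matrix.cons_val_one, Matrix.empty_val', Matrix.cons_val_fin_one]
  simp only [colSum] at hsum hcf hcop
  rw [Matrix.det_fin_two] at hdet
  refine ⟨by linarith, hnn 0 0, hnn 1 0, hsum 0, by linarith [hnn 0 1], by linarith [hnn 1 1],
    by linarith [hsum 1], ?_, ?_⟩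
  · rw [← Int.isCoprime_iff_gcd_eq_one]; convert hcop using 1; ring
  · rw [hcf]; push_cast; rw [← neg_add, div_neg]
end

section
/- Let p, q, r, s be positive integers with ps − qr = 1, and let m, n be nonzero integers. If 2s(p+r) + 1/m = 2q(p+r) + 1/n in the rational numbers, then m = n, q = s = 1, and p = r + 1. -/
/-!
Clearing denominators turns the equation into `2 (s - q) (p + r) m n = m - n`. Since
`|m - n| ≤ |m| + |n| ≤ 2 |m n|`, the integer factor `2 (s - q) (p + r)` has absolute value at most
`2`, and as `p + r ≥ 2` this forces `q = s`, hence `m = n`. The determinant condition then reads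
`q (p - r) = 1`, so `q = 1` and `p = r + 1`.
-/

theorem Int.mul_mul_eq_sub_of_add_one_div_eq {a b m n : ℤ} (hm : m ≠ 0) (hn : n ≠ 0)
    (h : (a : ℚ) + 1 / m = b + 1 / n) : (a - b) * m * n = m - n := by
  have hmQ : (m : ℚ) ≠ 0 := Int.cast_ne_zero.mpr hm
  have hnQ : (n : ℚ) ≠ 0 := Int.cast_ne_zero.mpr hn
  field_simp at h
  exact_mod_cast (by linear_combination h : ((a - b) * m * n : ℚ) = m - n)

theorem Int.abs_le_two_of_mul_mul_eq_sub {k m n : ℤ} (hm : m ≠ 0) (hn : n ≠ 0)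
    (h : k * m * n = m - n) : |k| ≤ 2 := by
  have hm1 : 1 ≤ |m| := Int.one_le_abs hm
  have hn1 : 1 ≤ |n| := Int.one_le_abs hn
  have hbound : |k| * (|m| * |n|) ≤ 2 * (|m| * |n|) :=
    calc |k| * (|m| * |n|) = |m - n| := by rw [← h, abs_mul, abs_mul, mul_assoc]
      _ ≤ |m| + |n| := abs_sub _ _
      _ ≤ 2 * (|m| * |n|) := by nlinarith
  exact le_of_mul_le_mul_right hbound (by positivity)

theorem stmt_12_general (p q r s : ℤ) (hp : 0 < p) (hq : 0 < q) (hr : 0 < r)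
    (hdet : p * s - q * r = 1)
    (m n : ℤ) (hm : m ≠ 0) (hn : n ≠ 0)
    (heq : ((2 * s * (p + r) : ℤ) : ℚ) + 1 / (m : ℚ)
         = ((2 * q * (p + r) : ℤ) : ℚ) + 1 / (n : ℚ)) :
    m = n ∧ q = 1 ∧ s = 1 ∧ p = r + 1 := by
  have hkey := Int.mul_mul_eq_sub_of_add_one_div_eq hm hn heq
  have hqs : q = s := by
    have habs := Int.abs_le_two_of_mul_mul_eq_sub hm hn hkey
    rw [show 2 * s * (p + r) - 2 * q * (p + r) = 2 * (p + r) * (s - q) by ring, abs_mul,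
      abs_of_pos (by omega : 0 < 2 * (p + r))] at habs
    by_contra hne
    nlinarith [Int.one_le_abs (sub_ne_zero.mpr (Ne.symm hne))]
  subst hqs
  have hq1 : q = 1 :=
    Int.eq_one_of_mul_eq_one_right hq.le (by linear_combination hdet : q * (p - r) = 1)
  refine ⟨by simpa [sub_eq_zero] using hkey.symm, hq1, hq1, ?_⟩
  subst hq1
  linear_combination hdet

/-- Lift-λ versus lift-ρ: if `p, q, r, s` are positive with `p*s - q*r = 1` and the slopes
`2s(p+r) + 1/m` and `2q(p+r) + 1/n` coincide in `ℚ` for nonzero integers `m`, `n`, then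
`m = n`, `q = s = 1`, and `p = r + 1`. -/
theorem stmt_12 (p q r s : ℤ) (hp : 0 < p) (hq : 0 < q) (hr : 0 < r) (hs : 0 < s)
    (hdet : p * s - q * r = 1)
    (m n : ℤ) (hm : m ≠ 0) (hn : n ≠ 0)
    (heq : ((2 * s * (p + r) : ℤ) : ℚ) + 1 / (m : ℚ)
         = ((2 * q * (p + r) : ℤ) : ℚ) + 1 / (n : ℚ)) :
    m = n ∧ q = 1 ∧ s = 1 ∧ p = r + 1 :=
  stmt_12_general p q r s hp hq hr hdet m n hm hn heq
end

section
/- Let p, q, r, s be positive integers with ps − qr = 1 and p + r > q + s, and let m, n be nonzero integers. If 2s(p+r) + 1/m = 2p(q+s) + 1/n in the rational numbers, then q = s = 1, p = r + 1, m = 1, and n = −1. -/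
/-!
Put `k = p q - r s`. The two slopes agree exactly when `1/m - 1/n = 2k`, and since a unit
fraction `1/m` lies in `[-1, 1]` (also for `m = 0`, where it is `0`), this forces `|k| ≤ 1`,
and `k = 1` forces `m = 1`, `n = -1`. On the knot side, `(p + r)(s - q) = (ps - qr) - k = 1 - k`
has absolute value at most `2`, while `p + r > q + s ≥ 2`; hence `s = q` and `k = 1`, and then
`ps - qr = q (p - r) = 1` gives `q = 1`, `p = r + 1`.
-/

section UnitFractions

variable {K : Type*} [Field K] [LinearOrder K] [IsStrictOrderedRing K]

theorem abs_intCast_inv_le_one (m : ℤ) : |(m : K)⁻¹| ≤ 1 := by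
  rcases eq_or_ne m 0 with rfl | hm
  · simp
  · rw [abs_inv, ← Int.cast_abs]
    exact inv_le_one_of_one_le₀ (by exact_mod_cast Int.one_le_abs hm)

theorem abs_le_one_of_intCast_inv_sub_inv_eq {m n k : ℤ}
    (h : (m : K)⁻¹ - (n : K)⁻¹ = 2 * k) : |k| ≤ 1 := by
  have hm := abs_le.mp (abs_intCast_inv_le_one (K := K) m)
  have hn := abs_le.mp (abs_intCast_inv_le_one (K := K) n)
  have hk : |(k : K)| ≤ 1 := abs_le.mpr ⟨by linarith, by linarith⟩
  exact_mod_cast hk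

theorem eq_one_and_eq_neg_one_of_intCast_inv_sub_inv_eq_two {m n : ℤ}
    (h : (m : K)⁻¹ - (n : K)⁻¹ = 2) : m = 1 ∧ n = -1 := by
  have hm := abs_le.mp (abs_intCast_inv_le_one (K := K) m)
  have hn := abs_le.mp (abs_intCast_inv_le_one (K := K) n)
  have hm1 : (m : K)⁻¹ = 1 := by linarith
  have hn1 : (n : K)⁻¹ = -1 := by linarith
  rw [inv_eq_one] at hm1
  rw [inv_eq_iff_eq_inv, inv_neg, inv_one] at hn1
  exact ⟨by exact_mod_cast hm1, by exact_mod_cast hn1⟩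

end UnitFractions

section TorusKnotMatrix

variable {p q r s : ℤ}

theorem eq_of_det_eq_one_of_abs_le_one (hq : 0 < q) (hs : 0 < s) (hdet : p * s - q * r = 1)
    (hnorm : q + s < p + r) (hk : |p * q - r * s| ≤ 1) : q = s := by
  have hprod : (p + r) * (s - q) = 1 - (p * q - r * s) := by linear_combination hdet
  obtain ⟨hk₁, hk₂⟩ := abs_le.mp hk
  by_contra hne
  rcases lt_or_gt_of_ne hne with hlt | hgt
  · nlinarith
  · nlinarith

theorem eq_one_of_det_eq_one_of_eq (hq : 0 < q) (hdet : p * s - q * r = 1) (hqs : q = s) :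
    q = 1 ∧ p = r + 1 := by
  subst hqs
  have hunit : q * (p - r) = 1 := by linear_combination hdet
  have hq1 : q = 1 := Int.eq_one_of_mul_eq_one_right hq.le hunit
  subst hq1
  exact ⟨rfl, by linarith⟩

end TorusKnotMatrix

theorem stmt_13_general (p q r s : ℤ) (hq : 0 < q) (hs : 0 < s)
    (hdet : p * s - q * r = 1) (hnorm : p + r > q + s)
    (m n : ℤ)
    (heq : ((2 * s * (p + r) : ℤ) : ℚ) + 1 / (m : ℚ)
         = ((2 * p * (q + s) : ℤ) : ℚ) + 1 / (n : ℚ)) :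
    q = 1 ∧ s = 1 ∧ p = r + 1 ∧ m = 1 ∧ n = -1 := by
  have hslopes : (m : ℚ)⁻¹ - (n : ℚ)⁻¹ = 2 * ((p * q - r * s : ℤ) : ℚ) := by
    push_cast at heq ⊢
    rw [one_div, one_div] at heq
    linear_combination heq
  have hqs := eq_of_det_eq_one_of_abs_le_one hq hs hdet hnorm
    (abs_le_one_of_intCast_inv_sub_inv_eq hslopes)
  obtain ⟨hq1, hpr⟩ := eq_one_of_det_eq_one_of_eq hq hdet hqs
  subst hq1 hqs hpr
  have hmn := eq_one_and_eq_neg_one_of_intCast_inv_sub_inv_eq_two (m := m) (n := n) (K := ℚ)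
    (by simpa using hslopes)
  exact ⟨rfl, rfl, rfl, hmn⟩

/-- Lift-λ versus drop-ρ: if `p, q, r, s` are positive with `p*s - q*r = 1` and
`p + r > q + s`, and the slopes `2s(p+r) + 1/m` and `2p(q+s) + 1/n` coincide in `ℚ` for
nonzero integers `m`, `n`, then `q = s = 1`, `p = r + 1`, `m = 1`, and `n = -1`. -/
theorem stmt_13 (p q r s : ℤ) (hp : 0 < p) (hq : 0 < q) (hr : 0 < r) (hs : 0 < s)
    (hdet : p * s - q * r = 1) (hnorm : p + r > q + s)
    (m n : ℤ) (hm : m ≠ 0) (hn : n ≠ 0)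
    (heq : ((2 * s * (p + r) : ℤ) : ℚ) + 1 / (m : ℚ)
         = ((2 * p * (q + s) : ℤ) : ℚ) + 1 / (n : ℚ)) :
    q = 1 ∧ s = 1 ∧ p = r + 1 ∧ m = 1 ∧ n = -1 :=
  stmt_13_general p q r s hq hs hdet hnorm m n heq
end

section
/- Let p, q, r, s be positive integers with ps − qr = 1 and p + r > q + s, and let m, n be nonzero integers. If 2r(q+s) + 1/m = 2q(p+r) + 1/n in the rational numbers, then q = s = 1, p = r + 1, m = 1, and n = −1. -/
/-!
Subtracting the two slopes gives `1/m - 1/n = 2(qp - rs)`, i.e. `n - m = 2(qp - rs)mn`. Then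
`m ∣ n` and `n ∣ m`, which forces `qp - rs = 0` or `m = -n = ±(qp - rs) = ±1`. The matrix
entries are pinned down by the identities `(p + r)(s - q) = 1 - (qp - rs)` and
`(p - r)(s + q) = 1 + (qp - rs)`, which follow from `ps - qr = 1`.
-/

lemma Int.sub_eq_mul_mul_of_add_one_div_eq {a b m n : ℤ} (hm : m ≠ 0) (hn : n ≠ 0)
    (h : (a : ℚ) + 1 / m = b + 1 / n) : n - m = (b - a) * m * n := by
  have hQ : ((n - m : ℤ) : ℚ) = ((b - a) * m * n : ℤ) := by
    field_simp at h
    push_cast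
    linear_combination h
  exact_mod_cast hQ

lemma Int.sub_eq_two_mul_mul_mul_cases {k m n : ℤ} (hm : m ≠ 0) (hn : n ≠ 0)
    (h : n - m = 2 * k * m * n) :
    k = 0 ∨ k = 1 ∧ m = 1 ∧ n = -1 ∨ k = -1 ∧ m = -1 ∧ n = 1 := by
  have hmn : m ∣ n := ⟨1 + 2 * k * n, by linear_combination h⟩
  have hnm : n ∣ m := ⟨1 - 2 * k * m, by linear_combination -h⟩
  rcases Int.natAbs_eq_natAbs_iff.mp (Int.natAbs_eq_of_dvd_dvd hnm hmn) with rfl | rfl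
  · left
    have : 2 * k * n * n = 0 := by linear_combination -h
    simpa [hn] using this
  · right
    have hkm : k * m = 1 := by
      have : m * (2 * (k * m - 1)) = 0 := by linear_combination h
      simpa [hm, sub_eq_zero] using this
    rcases Int.mul_eq_one_iff_eq_one_or_neg_one.mp hkm with ⟨rfl, rfl⟩ | ⟨rfl, rfl⟩ <;> simp

section DetOne

variable {p q r s : ℤ}

lemma cross_ne_zero_of_det_eq_one (hp : 0 < p) (hr : 0 < r) (hdet : p * s - q * r = 1) :
    q * p - r * s ≠ 0 := by
  intro h
  have hprod : (p + r) * (s - q) = 1 := by linear_combination hdet - h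
  rcases Int.eq_one_or_neg_one_of_mul_eq_one hprod with h' | h' <;> omega

lemma cross_ne_neg_one_of_det_eq_one (hp : 0 < p) (hq : 0 < q) (hs : 0 < s)
    (hdet : p * s - q * r = 1) (hnorm : p + r > q + s) : q * p - r * s ≠ -1 := by
  intro h
  have hpr : p = r := by
    have hprod : (p - r) * (s + q) = 0 := by linear_combination hdet + h
    rcases mul_eq_zero.mp hprod with h' | h' <;> omega
  subst hpr
  have hprod : p * (s - q) = 1 := by linear_combination hdet
  rcases Int.eq_one_or_neg_one_of_mul_eq_one hprod with h' | h' <;> omega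

lemma eq_of_det_eq_one_of_cross_eq_one (hp : 0 < p) (hq : 0 < q) (hr : 0 < r)
    (hdet : p * s - q * r = 1) (h : q * p - r * s = 1) : q = 1 ∧ s = 1 ∧ p = r + 1 := by
  have hsq : s = q := by
    have hprod : (p + r) * (s - q) = 0 := by linear_combination hdet - h
    rcases mul_eq_zero.mp hprod with h' | h' <;> omega
  subst hsq
  have hprod : s * (p - r) = 1 := by linear_combination hdet
  rcases Int.mul_eq_one_iff_eq_one_or_neg_one.mp hprod with h' | h' <;> omega

end DetOne

/-- Drop-λ versus lift-ρ: if `p, q, r, s` are positive with `p*s - q*r = 1` and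
`p + r > q + s`, and the slopes `2r(q+s) + 1/m` and `2q(p+r) + 1/n` coincide in `ℚ` for
nonzero integers `m`, `n`, then `q = s = 1`, `p = r + 1`, `m = 1`, and `n = -1`. -/
theorem stmt_14 (p q r s : ℤ) (hp : 0 < p) (hq : 0 < q) (hr : 0 < r) (hs : 0 < s)
    (hdet : p * s - q * r = 1) (hnorm : p + r > q + s)
    (m n : ℤ) (hm : m ≠ 0) (hn : n ≠ 0)
    (heq : ((2 * r * (q + s) : ℤ) : ℚ) + 1 / (m : ℚ)
         = ((2 * q * (p + r) : ℤ) : ℚ) + 1 / (n : ℚ)) :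
    q = 1 ∧ s = 1 ∧ p = r + 1 ∧ m = 1 ∧ n = -1 := by
  have hslope : n - m = 2 * (q * p - r * s) * m * n := by
    rw [Int.sub_eq_mul_mul_of_add_one_div_eq hm hn heq]
    ring
  rcases Int.sub_eq_two_mul_mul_mul_cases hm hn hslope with hk | ⟨hk, rfl, rfl⟩ | ⟨hk, -, -⟩
  · exact absurd hk (cross_ne_zero_of_det_eq_one hp hr hdet)
  · obtain ⟨hq1, hs1, hpr⟩ := eq_of_det_eq_one_of_cross_eq_one hp hq hr hdet hk
    exact ⟨hq1, hs1, hpr, rfl, rfl⟩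
  · exact absurd hk (cross_ne_neg_one_of_det_eq_one hp hq hs hdet hnorm)
end
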